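/- Let 𝒫 = 𝒢_{κ¹} × G²_{ψ_live(Eℓ),κ²} be the product of the labeled game 𝒢_{κ¹} and the labeled augmented game graph G² described below, built from an alternating augmented game 𝔊 = ((V,E), Φ, ψ_glive(ℋ)) with pairwise disjoint live groups ℋ = {H1,…,Hm} and initial Player-1 vertex v_init. Then a play ρ in 𝒫 starting at the initial vertex (v_init, u0) is winning for Player 0 in 𝒫 if and only if its first projection proj¹(ρ) (which is a play in (V,E) from v_init) is winning for Player 0 in 𝔊. -/
import Mathlib


universe u

/-- A two-player game graph: finite-intended vertex set `V`, an ownership function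
(`owner v = 0` means `v` is a Player-0 vertex, `owner v = 1` a Player-1 vertex),
and an edge relation such that every vertex has at least one outgoing edge. -/
structure GameGraph (V : Type u) where
  owner : V → Fin 2
  E : V → V → Prop
  exists_succ : ∀ v, ∃ w, E v w

variable {V : Type u}

/-- A play of the game graph: an infinite sequence of vertices following edges. -/
def IsPlay (G : GameGraph V) (ρ : ℕ → V) : Prop :=
  ∀ k, G.E (ρ k) (ρ (k + 1))

/-- A (history-dependent) strategy: given the list of previously visited
vertices and the current vertex, it chooses a next vertex. -/
abbrev Strategy (V : Type u) := List V → V → V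

/-- A strategy of Player `i` is valid if at each Player-`i` vertex it chooses
an edge of the game graph. -/
def StratValid (G : GameGraph V) (i : Fin 2) (σ : Strategy V) : Prop :=
  ∀ (h : List V) (v : V), G.owner v = i → G.E v (σ h v)

/-- A positional (memoryless) strategy ignores the history. -/
def Positional (σ : Strategy V) : Prop :=
  ∀ (h h' : List V) (v : V), σ h v = σ h' v

/-- A play is compliant with the strategy `σ` of Player `i` (a `σ`-play) if at
every Player-`i` vertex it moves to the vertex chosen by `σ`. -/
def Compliant (G : GameGraph V) (i : Fin 2) (σ : Strategy V) (ρ : ℕ → V) : Prop :=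
  ∀ k, G.owner (ρ k) = i → ρ (k + 1) = σ (List.ofFn fun j : Fin k => ρ j.val) (ρ k)

/-- `σ` is a winning strategy for Player `i` from `v`, where `W` is the set of
plays that are winning for Player `i`. -/
def WinsFrom (G : GameGraph V) (i : Fin 2) (W : Set (ℕ → V)) (σ : Strategy V) (v : V) : Prop :=
  StratValid G i σ ∧
    ∀ ρ : ℕ → V, IsPlay G ρ → Compliant G i σ ρ → ρ 0 = v → ρ ∈ W

/-- The winning region of Player `i`: the vertices from which Player `i` has a
winning strategy. -/
def WinRegion (G : GameGraph V) (i : Fin 2) (W : Set (ℕ → V)) : Set V :=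
  {v | ∃ σ, WinsFrom G i W σ v}

/-- A vertex occurs infinitely often along a play. -/
def InfOft (ρ : ℕ → V) (v : V) : Prop := ∀ n, ∃ k, n ≤ k ∧ ρ k = v

/-- An edge is taken infinitely often along a play. -/
def EdgeInfOft (ρ : ℕ → V) (e : V × V) : Prop :=
  ∀ n, ∃ k, n ≤ k ∧ ρ k = e.1 ∧ ρ (k + 1) = e.2

/-- Parity objective: the maximal priority occurring infinitely often is even. -/
def ParityWin (P : V → ℕ) (ρ : ℕ → V) : Prop :=
  ∃ v, InfOft ρ v ∧ Even (P v) ∧ ∀ w, InfOft ρ w → P w ≤ P v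

/-- The set of source vertices of a set of edges. -/
def srcSet (H : Set (V × V)) : Set V := {u | ∃ w, (u, w) ∈ H}

/-- Group transition fairness (live group) assumption: for every live group `H`,
if some source vertex of `H` occurs infinitely often, then some edge of `H` is
taken infinitely often. -/
def psiGlive (Hc : Set (Set (V × V))) (ρ : ℕ → V) : Prop :=
  ∀ H ∈ Hc, (∃ u ∈ srcSet H, InfOft ρ u) → ∃ e ∈ H, EdgeInfOft ρ e

/-- Vertices of the small labeled augmented game graph `G²`: the Player-1 vertex
`u0`, and the Player-0 vertices `u_*` and `x_1, …, x_m`. -/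
inductive U2 (m : ℕ) : Type
  | u0 : U2 m
  | ustar : U2 m
  | x : Fin m → U2 m

/-- The labeled edge relation of `𝒢_{κ¹}`: an edge `u → w` of `G` carries the
label `some i` (the letter `h_i`) if it belongs to the live group `H_i`, and the
label `none` (the letter `a`) otherwise. -/
def Ledge1 (G : GameGraph V) {m : ℕ} (Hs : Fin m → Set (V × V))
    (u w : V) (c : Option (Fin m)) : Prop :=
  G.E u w ∧ ((∃ i, c = some i ∧ (u, w) ∈ Hs i) ∨ (c = none ∧ ∀ i, (u, w) ∉ Hs i))

/-- The labeled edge relation of `G²`: edges `(u0, x_i)` labeled `h_i` (these are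
the live edges), and edges `(x_i, u0)`, `(u0, u_*)`, `(u_*, u0)` labeled `a`. -/
def Ledge2 {m : ℕ} : U2 m → U2 m → Option (Fin m) → Prop
  | U2.u0, U2.x i, c => c = some i
  | U2.x _, U2.u0, c => c = none
  | U2.u0, U2.ustar, c => c = none
  | U2.ustar, U2.u0, c => c = none
  | _, _, _ => False

/-- The edge relation of the product game `𝒫`: `(v,v') → (w,w')` iff for some
letter `c` both `v → w` is an edge of `𝒢_{κ¹}` labeled `c` and `v' → w'` is an
edge of `G²` labeled `c`. -/
def Eprod (G : GameGraph V) {m : ℕ} (Hs : Fin m → Set (V × V))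
    (p q : V × U2 m) : Prop :=
  ∃ c : Option (Fin m), Ledge1 G Hs p.1 q.1 c ∧ Ledge2 p.2 q.2 c

/-- The live group `H_{(u0, x_i)}` of the product game: all product edges whose
second components move from `u0` to `x_i`. -/
def Hprod (G : GameGraph V) {m : ℕ} (Hs : Fin m → Set (V × V)) (i : Fin m) :
    Set ((V × U2 m) × (V × U2 m)) :=
  {e | Eprod G Hs e.1 e.2 ∧ e.1.2 = U2.u0 ∧ e.2.2 = U2.x i}

/-- The set `ℋ_𝒫 = {H_{(u0,x_i)} : i ∈ [1;m]}` of live groups of the product. -/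
def HprodSet (G : GameGraph V) {m : ℕ} (Hs : Fin m → Set (V × V)) :
    Set (Set ((V × U2 m) × (V × U2 m))) :=
  {H | ∃ i : Fin m, H = Hprod G Hs i}

/-- First projection of a play of the product game. -/
def proj1 {m : ℕ} (ρ : ℕ → V × U2 m) : ℕ → V := fun n => (ρ n).1

private lemma fin2_flip {a b : Fin 2} (h : a ≠ b) (ha : a ≠ 1) : b = 1 := by
  fin_cases a <;> fin_cases b <;> simp_all

/-- Let `𝒫 = 𝒢_{κ¹} × G²_{ψ_live(Eℓ),κ²}` be the product built
from an alternating augmented game `𝔊 = ((V,E), Φ, ψ_glive(ℋ))` with pairwise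
disjoint live groups `ℋ = {H_1, …, H_m}` (each consisting of Player-1 edges, so
that all Player-0 edges are labeled `a`) and initial Player-1 vertex `v_init`.
Then a play `ρ` of `𝒫` starting at `(v_init, u0)` is winning for Player 0 in
`𝒫` iff its first projection is winning for Player 0 in `𝔊`. -/
theorem stmt9 (V : Type) [Fintype V] (G : GameGraph V)
    (halt : ∀ u w : V, G.E u w → G.owner u ≠ G.owner w)
    (m : ℕ) (Hs : Fin m → Set (V × V))
    (hHE : ∀ i, ∀ e ∈ Hs i, G.E e.1 e.2)
    (hH1 : ∀ i, ∀ e ∈ Hs i, G.owner e.1 = 1)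
    (hdisj : ∀ i j, i ≠ j → Disjoint (Hs i) (Hs j))
    (Φ : Set (ℕ → V))
    (vinit : V) (hvinit : G.owner vinit = 1)
    (ρ : ℕ → V × U2 m)
    (hρ : ∀ n, Eprod G Hs (ρ n) (ρ (n + 1)))
    (h0 : ρ 0 = (vinit, U2.u0)) :
    (psiGlive (HprodSet G Hs) ρ → proj1 ρ ∈ Φ) ↔
      (psiGlive {H | ∃ i : Fin m, H = Hs i} (proj1 ρ) → proj1 ρ ∈ Φ) := by
  -- Invariant: second component is u0 iff owner of first component is Player 1.
  have inv : ∀ n, ((ρ n).2 = U2.u0 ↔ G.owner (ρ n).1 = 1) := by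
    intro n
    induction n with
    | zero => rw [h0]; simpa using hvinit
    | succ n ih =>
      obtain ⟨c, ⟨hE, _⟩, h2⟩ := hρ n
      have hne := halt _ _ hE
      rcases hs2 : (ρ n).2 with _ | _ | j
      · rw [hs2] at ih h2
        have hown : G.owner (ρ n).1 = 1 := ih.mp rfl
        have hown' : G.owner (ρ (n + 1)).1 ≠ 1 := fun hb => hne (hown.trans hb.symm)
        rcases ht : (ρ (n + 1)).2 with _ | _ | j'
        · rw [ht] at h2; simp [Ledge2] at h2
        · simp [hown']
        · simp [hown']
      · rw [hs2] at ih h2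
        have hown : G.owner (ρ n).1 ≠ 1 := fun h => by simpa using ih.mpr h
        rcases ht : (ρ (n + 1)).2 with _ | _ | j'
        · have hown' : G.owner (ρ (n + 1)).1 = 1 := fin2_flip hne hown
          simp [hown']
        · rw [ht] at h2; simp [Ledge2] at h2
        · rw [ht] at h2; simp [Ledge2] at h2
      · rw [hs2] at ih h2
        have hown : G.owner (ρ n).1 ≠ 1 := fun h => by simpa using ih.mpr h
        rcases ht : (ρ (n + 1)).2 with _ | _ | j'
        · have hown' : G.owner (ρ (n + 1)).1 = 1 := fin2_flip hne hown
          simp [hown']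
        · rw [ht] at h2; simp [Ledge2] at h2
        · rw [ht] at h2; simp [Ledge2] at h2
  have hlive : psiGlive (HprodSet G Hs) ρ ↔
      psiGlive {H | ∃ i : Fin m, H = Hs i} (proj1 ρ) := by
    constructor
    · intro hP H hH hsrc
      obtain ⟨i, rfl⟩ := hH
      obtain ⟨u, ⟨w, huw⟩, hu⟩ := hsrc
      have hou : G.owner u = 1 := hH1 i (u, w) huw
      have hinf : InfOft ρ (u, U2.u0) := by
        intro n
        obtain ⟨k, hk, hk'⟩ := hu n
        have h2 : (ρ k).2 = U2.u0 := (inv k).mpr (by rw [show (ρ k).1 = u from hk']; exact hou)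
        exact ⟨k, hk, Prod.ext hk' h2⟩
      have hsrcP : ∃ p ∈ srcSet (Hprod G Hs i), InfOft ρ p := by
        refine ⟨(u, U2.u0), ⟨(w, U2.x i), ?_, rfl, rfl⟩, hinf⟩
        exact ⟨some i, ⟨hHE i (u, w) huw, Or.inl ⟨i, rfl, huw⟩⟩, rfl⟩
      obtain ⟨e, ⟨⟨c, hl1, hl2⟩, he1, he2⟩, heInf⟩ := hP (Hprod G Hs i) ⟨i, rfl⟩ hsrcP
      rw [he1, he2] at hl2
      have hc : c = some i := hl2
      subst hc
      have hmem : (e.1.1, e.2.1) ∈ Hs i := by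
        rcases hl1.2 with ⟨j, hj, hmemj⟩ | ⟨hn, _⟩
        · obtain rfl : i = j := by injection hj
          exact hmemj
        · exact absurd hn (by simp)
      refine ⟨(e.1.1, e.2.1), hmem, fun n => ?_⟩
      obtain ⟨k, hk, hk1, hk2⟩ := heInf n
      exact ⟨k, hk, by rw [show proj1 ρ k = (ρ k).1 from rfl, hk1],
        by rw [show proj1 ρ (k + 1) = (ρ (k + 1)).1 from rfl, hk2]⟩
    · intro hB H hH hsrc
      obtain ⟨i, rfl⟩ := hH
      obtain ⟨p, ⟨q, ⟨c, hl1, hl2⟩, hp2, hq2⟩, hpInf⟩ := hsrc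
      rw [hp2, hq2] at hl2
      have hc : c = some i := hl2
      subst hc
      have hmem : (p.1, q.1) ∈ Hs i := by
        rcases hl1.2 with ⟨j, hj, hmemj⟩ | ⟨hn, _⟩
        · obtain rfl : i = j := by injection hj
          exact hmemj
        · exact absurd hn (by simp)
      have hsrcB : ∃ u ∈ srcSet (Hs i), InfOft (proj1 ρ) u := by
        refine ⟨p.1, ⟨q.1, hmem⟩, fun n => ?_⟩
        obtain ⟨k, hk, hk'⟩ := hpInf n
        exact ⟨k, hk, by rw [show proj1 ρ k = (ρ k).1 from rfl, hk']⟩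
      obtain ⟨e, heH, heInf⟩ := hB (Hs i) ⟨i, rfl⟩ hsrcB
      obtain ⟨v, w⟩ := e
      have hov : G.owner v = 1 := hH1 i (v, w) heH
      have key : ∀ k, (ρ k).1 = v → (ρ (k + 1)).1 = w →
          ρ k = (v, U2.u0) ∧ ρ (k + 1) = (w, U2.x i) := by
        intro k h1 h2'
        have hk2 : (ρ k).2 = U2.u0 := (inv k).mpr (by rw [h1]; exact hov)
        obtain ⟨c, hl1, hl2⟩ := hρ k
        rw [hk2] at hl2
        rw [h1, h2'] at hl1
        have hc : c = some i := by
          rcases hl1.2 with ⟨j, hj, hmemj⟩ | ⟨hn, hno⟩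
          · have hij : i = j := by
              by_contra hne
              exact Set.disjoint_left.mp (hdisj i j hne) heH hmemj
            rw [hj, hij]
          · exact absurd heH (hno i)
        subst hc
        have ht : (ρ (k + 1)).2 = U2.x i := by
          rcases h : (ρ (k + 1)).2 with _ | _ | j'
          · rw [h] at hl2; simp [Ledge2] at hl2
          · rw [h] at hl2; simp [Ledge2] at hl2
          · rw [h] at hl2
            have hij : i = j' := by injection hl2
            rw [hij]
        exact ⟨Prod.ext h1 hk2, Prod.ext h2' ht⟩
      obtain ⟨k0, _, hk01, hk02⟩ := heInf 0
      obtain ⟨hkA, hkB⟩ := key k0 hk01 hk02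
      refine ⟨((v, U2.u0), (w, U2.x i)), ⟨by rw [← hkA, ← hkB]; exact hρ k0, rfl, rfl⟩,
        fun n => ?_⟩
      obtain ⟨k, hk, h1, h2'⟩ := heInf n
      obtain ⟨hA, hB'⟩ := key k h1 h2'
      exact ⟨k, hk, hA, hB'⟩
  exact imp_congr hlive Iff.rfl
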